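/- Let X be a finite connected graph of genus g and let G be a finite group acting on X, possibly with invertible edges. Define g(X/G)_tail = 1 − (#(G-orbits on V(X)) + #(G-orbits on E(X))) + #(G-orbits on D(X)), the genus of the factor graph with semi-edges, obtained as the genus of the quotient of the barycentric subdivision of X by G. Then g − 1 = |G|·(g(X/G)_tail − 1) + Σ_{v ∈ V(X)} (|G^v| − 1) − Σ_{e ∈ E(X)} (|G^e| − 1) + Σ_{e ∈ E^inv(X)} |G^e|. -/

import Mathlib

/-!
Each of the three `G`-sets of the graph (vertices, darts, and edges with the induced action on
unordered pairs) is counted by the orbit-stabiliser identity `∑_{x ∈ A} |G_x| = |G| · |A / G|`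
for an invariant finite set `A`. The two darts of an edge `e` both have stabiliser `G^e`, so the
dart sum is twice the sum of the `|G^e|`. The setwise stabiliser of `e` is `G^e` together with the
elements exchanging the two darts, which form a coset of `G^e` exactly when `e` is invertible, so
`|G^{e}| = 2 |G^e|` or `|G^e|`. Substituting these identities into the definitions of `g` and
`gQ` leaves an identity of integers.
-/

open MulAction

namespace Sym2

variable {G α : Type*} [Group G] [MulAction G α]

instance : MulAction G (Sym2 α) where
  smul g := Sym2.map (g • ·)
  one_smul e := by
    change Sym2.map _ e = e
    simp only [one_smul, Sym2.map_id', id]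
  mul_smul g h e := by
    change Sym2.map _ e = Sym2.map _ (Sym2.map _ e)
    rw [Sym2.map_map]
    simp only [Function.comp_def, mul_smul]

@[simp]
theorem smul_mk (g : G) (x y : α) : g • s(x, y) = s(g • x, g • y) := rfl

theorem orbit_eq_setOf (e : Sym2 α) :
    orbit G e = {e' | ∃ g : G, Sym2.map (g • ·) e = e'} := rfl

end Sym2

theorem finsum_mem_const_eq_ncard_mul {α : Type*} (s : Set α) (c : ℕ) :
    ∑ᶠ _ ∈ s, c = s.ncard * c := by
  rw [← finsum_one, finsum_mem_mul]
  simp only [one_mul]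

namespace MulAction

variable {G X : Type*} [Group G] [MulAction G X]

theorem ncard_setOf_smul_eq {x y : X} (h : y ∈ orbit G x) :
    {g : G | g • x = y}.ncard = Nat.card (stabilizer G x) := by
  obtain ⟨g₀, rfl⟩ := h
  have hcoset : {g : G | g • x = g₀ • x} = (g₀ * ·) '' (stabilizer G x : Set G) := by
    ext g
    refine ⟨fun hg => ⟨g₀⁻¹ * g, ?_, mul_inv_cancel_left g₀ g⟩, ?_⟩
    · rw [SetLike.mem_coe, mem_stabilizer_iff, mul_smul, hg, inv_smul_smul]
    · rintro ⟨h, hh, rfl⟩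
      rw [Set.mem_ofPred_eq, mul_smul, (mem_stabilizer_iff.1 hh)]
  rw [hcoset, Set.ncard_image_of_injective _ (mul_right_injective g₀), ← Nat.card_coe_set_eq,
    SetLike.coe_sort_coe]

theorem finsum_mem_orbit_card_stabilizer (x : X) :
    ∑ᶠ y ∈ orbit G x, Nat.card (stabilizer G y) = Nat.card G := by
  have hconst : ∀ y ∈ orbit G x, Nat.card (stabilizer G y) = Nat.card (stabilizer G x) :=
    fun y hy => Nat.card_congr (stabilizerEquivStabilizerOfOrbitRel (orbitRel_apply.2 hy)).toEquiv
  rw [finsum_mem_congr rfl hconst, finsum_mem_const_eq_ncard_mul, ← index_stabilizer, mul_comm,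
    Subgroup.card_mul_index]

theorem finsum_mem_card_stabilizer_of_smul_mem {A : Set X}
    (hA : ∀ g : G, ∀ x ∈ A, g • x ∈ A) (hAfin : A.Finite) :
    ∑ᶠ x ∈ A, Nat.card (stabilizer G x)
      = Nat.card {o : Set X | ∃ x ∈ A, o = orbit G x} * Nat.card G := by
  have hA_sUnion : A = ⋃₀ (orbit G '' A) := by
    ext x
    simp only [Set.sUnion_image, Set.mem_iUnion, exists_prop]
    refine ⟨fun hx => ⟨x, hx, mem_orbit_self x⟩, ?_⟩
    rintro ⟨y, hy, g, rfl⟩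
    exact hA g y hy
  have hdisj : (orbit G '' A).PairwiseDisjoint id :=
    orbit.pairwiseDisjoint.subset (Set.image_subset_range _ _)
  have hfin : ∀ o ∈ orbit G '' A, o.Finite := by
    rintro _ ⟨x, hx, rfl⟩
    refine hAfin.subset ?_
    rintro _ ⟨g, rfl⟩
    exact hA g x hx
  calc ∑ᶠ x ∈ A, Nat.card (stabilizer G x)
      = ∑ᶠ o ∈ orbit G '' A, ∑ᶠ x ∈ o, Nat.card (stabilizer G x) := by
        conv_lhs => rw [hA_sUnion]
        exact finsum_mem_sUnion hdisj (hAfin.image _) hfin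
    _ = ∑ᶠ _ ∈ orbit G '' A, Nat.card G := by
        refine finsum_mem_congr rfl ?_
        rintro _ ⟨x, -, rfl⟩
        exact finsum_mem_orbit_card_stabilizer x
    _ = Nat.card {o : Set X | ∃ x ∈ A, o = orbit G x} * Nat.card G := by
        rw [finsum_mem_const_eq_ncard_mul, ← Nat.card_coe_set_eq]
        congr
        ext
        simp only [Set.mem_image, Set.mem_ofPred_eq, eq_comm]

theorem finsum_card_stabilizer [Finite X] :
    ∑ᶠ x : X, Nat.card (stabilizer G x)
      = Nat.card {o : Set X | ∃ x, o = orbit G x} * Nat.card G := by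
  simpa only [Set.mem_univ, true_and, finsum_true] using
    finsum_mem_card_stabilizer_of_smul_mem (G := G) (fun _ _ _ => Set.mem_univ _)
      (Set.finite_univ (α := X))

end MulAction

theorem finsum_mem_ite_eq_finsum_mem_sep {α M : Type*} [AddCommMonoid M] (s : Set α)
    (p : α → Prop) [DecidablePred p] (f : α → M) :
    ∑ᶠ x ∈ s, (if p x then f x else 0) = ∑ᶠ x ∈ {x | x ∈ s ∧ p x}, f x := by
  simp only [finsum_mem_def]
  refine finsum_congr fun x => ?_
  by_cases hs : x ∈ s <;> by_cases hp : p x <;> simp [hs, hp]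

section Darts

variable {D : Type*} {bar : D → D}

theorem pair_eq_pair_iff (hinv : ∀ x, bar (bar x) = x) {x y : D} :
    s(y, bar y) = s(x, bar x) ↔ y = x ∨ y = bar x := by
  rw [Sym2.eq_iff]
  constructor
  · rintro (⟨h, -⟩ | ⟨h, -⟩)
    exacts [Or.inl h, Or.inr h]
  · rintro (rfl | rfl)
    exacts [Or.inl ⟨rfl, rfl⟩, Or.inr ⟨rfl, hinv x⟩]

theorem finsum_comp_pair_eq_two_nsmul [Fintype D] {M : Type*} [AddCommMonoid M]
    (hinv : ∀ x, bar (bar x) = x) (hnofix : ∀ x, bar x ≠ x) (f : Sym2 D → M) :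
    ∑ᶠ x, f s(x, bar x) = 2 • ∑ᶠ e ∈ Set.range fun x => s(x, bar x), f e := by
  classical
  rw [finsum_eq_sum_of_fintype, Finset.sum_comp, ← Set.image_univ, ← Finset.coe_univ,
    ← Finset.coe_image, finsum_mem_coe_finset, Finset.smul_sum]
  refine Finset.sum_congr rfl ?_
  intro e he
  obtain ⟨x, -, rfl⟩ := Finset.mem_image.1 he
  have hfiber : Finset.univ.filter (fun y => s(y, bar y) = s(x, bar x)) = {x, bar x} := by
    ext y
    simp only [Finset.mem_filter, Finset.mem_univ, true_and, Finset.mem_insert,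
      Finset.mem_singleton, pair_eq_pair_iff hinv]
  rw [hfiber, Finset.card_pair (hnofix x).symm]

end Darts

section EquivariantInvolution

variable {G D : Type*} [Group G] [MulAction G D] {bar : D → D}

theorem smul_mem_range_pair (hbar : ∀ (g : G) x, bar (g • x) = g • bar x) (g : G)
    {e : Sym2 D} (he : e ∈ Set.range fun x => s(x, bar x)) :
    g • e ∈ Set.range fun x => s(x, bar x) := by
  obtain ⟨x, rfl⟩ := he
  exact ⟨g • x, by simp only [Sym2.smul_mk, hbar]⟩

theorem setOf_forall_mem_pair_smul_eq_self (hbar : ∀ (g : G) x, bar (g • x) = g • bar x)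
    (x : D) : {g : G | ∀ y ∈ s(x, bar x), g • y = y} = stabilizer G x := by
  ext g
  simp only [Set.mem_ofPred_eq, Sym2.mem_iff, forall_eq_or_imp, forall_eq, SetLike.mem_coe,
    mem_stabilizer_iff, and_iff_left_iff_imp]
  intro hg
  rw [← hbar, hg]

theorem stabilizer_pair_eq_union (hinv : ∀ x, bar (bar x) = x)
    (hbar : ∀ (g : G) x, bar (g • x) = g • bar x) (x : D) :
    (stabilizer G s(x, bar x) : Set G) = (stabilizer G x : Set G) ∪ {g | g • x = bar x} := by
  ext g
  simp only [SetLike.mem_coe, mem_stabilizer_iff, Sym2.smul_mk, Sym2.eq_iff, ← hbar,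
    Set.mem_union, Set.mem_ofPred_eq]
  constructor
  · rintro (⟨h, -⟩ | ⟨h, -⟩)
    exacts [Or.inl h, Or.inr h]
  · rintro (h | h)
    exacts [Or.inl ⟨h, by rw [h]⟩, Or.inr ⟨h, by rw [h, hinv]⟩]

theorem card_stabilizer_pair [Finite G] (hinv : ∀ x, bar (bar x) = x)
    (hnofix : ∀ x, bar x ≠ x) (hbar : ∀ (g : G) x, bar (g • x) = g • bar x) (x : D)
    [Decidable (bar x ∈ orbit G x)] :
    Nat.card (stabilizer G s(x, bar x))
      = Nat.card (stabilizer G x)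
        + if bar x ∈ orbit G x then Nat.card (stabilizer G x) else 0 := by
  have hdisj : Disjoint (stabilizer G x : Set G) {g | g • x = bar x} :=
    Set.disjoint_left.2 fun g hx hbx => hnofix x (hbx.symm.trans hx)
  rw [← SetLike.coe_sort_coe, Nat.card_coe_set_eq, stabilizer_pair_eq_union hinv hbar,
    Set.ncard_union_eq hdisj, ← Nat.card_coe_set_eq, SetLike.coe_sort_coe]
  split_ifs with h
  · rw [ncard_setOf_smul_eq h]
  · have hempty : {g : G | g • x = bar x} = ∅ :=
      Set.eq_empty_of_forall_notMem fun g hg => h ⟨g, hg⟩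
    rw [hempty, Set.ncard_empty]

theorem exists_smul_eq_bar_iff (hinv : ∀ x, bar (bar x) = x)
    (hbar : ∀ (g : G) x, bar (g • x) = g • bar x) (x : D) :
    (∃ y ∈ s(x, bar x), ∃ g : G, g • y = bar y) ↔ bar x ∈ orbit G x := by
  simp only [Sym2.mem_iff, exists_eq_or_imp, exists_eq_left, hinv, mem_orbit_iff]
  refine ⟨fun h => h.elim id fun ⟨g, hg⟩ => ⟨g, ?_⟩, Or.inl⟩
  simpa only [hbar, hinv] using congrArg bar hg

theorem finsum_card_stabilizer_eq_two_mul [Fintype D] (hinv : ∀ x, bar (bar x) = x)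
    (hnofix : ∀ x, bar x ≠ x) (hbar : ∀ (g : G) x, bar (g • x) = g • bar x) :
    ∑ᶠ x : D, Nat.card (stabilizer G x)
      = 2 * ∑ᶠ e ∈ Set.range fun x => s(x, bar x),
          Nat.card {g : G | ∀ y ∈ e, g • y = y} := by
  rw [← smul_eq_mul, ← finsum_comp_pair_eq_two_nsmul (M := ℕ) hinv hnofix]
  refine finsum_congr fun x => ?_
  rw [setOf_forall_mem_pair_smul_eq_self hbar, SetLike.coe_sort_coe]

theorem finsum_mem_range_pair_card_stabilizer [Finite D] [Finite G] (hinv : ∀ x, bar (bar x) = x)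
    (hnofix : ∀ x, bar x ≠ x) (hbar : ∀ (g : G) x, bar (g • x) = g • bar x) :
    ∑ᶠ e ∈ Set.range (fun x => s(x, bar x)), Nat.card (stabilizer G e)
      = ∑ᶠ e ∈ Set.range (fun x => s(x, bar x)), Nat.card {g : G | ∀ y ∈ e, g • y = y}
        + ∑ᶠ e ∈ {e | e ∈ Set.range (fun x => s(x, bar x)) ∧
              ∃ y ∈ e, ∃ g : G, g • y = bar y},
            Nat.card {g : G | ∀ y ∈ e, g • y = y} := by
  classical
  rw [← finsum_mem_ite_eq_finsum_mem_sep, ← finsum_mem_add_distrib (Set.finite_range _)]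
  refine finsum_mem_congr rfl ?_
  rintro _ ⟨x, rfl⟩
  simp only [card_stabilizer_pair hinv hnofix hbar, setOf_forall_mem_pair_smul_eq_self hbar,
    SetLike.coe_sort_coe, exists_smul_eq_bar_iff hinv hbar]

end EquivariantInvolution

theorem finsum_mem_natCast_sub_one {α : Type*} {s : Set α} (hs : s.Finite) (f : α → ℕ) :
    ∑ᶠ x ∈ s, ((f x : ℤ) - 1) = ((∑ᶠ x ∈ s, f x : ℕ) : ℤ) - Nat.card s := by
  rw [finsum_mem_sub_distrib _ _ hs, Nat.card_coe_set_eq, ← finsum_one, Nat.cast_finsum_mem hs,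
    Nat.cast_finsum_mem hs, Nat.cast_one]

theorem finsum_natCast_sub_one {α : Type*} [Finite α] (f : α → ℕ) :
    ∑ᶠ x, ((f x : ℤ) - 1) = ((∑ᶠ x, f x : ℕ) : ℤ) - Nat.card α := by
  simpa only [finsum_mem_univ, Nat.card_univ] using finsum_mem_natCast_sub_one Set.finite_univ f

theorem riemann_hurwitz_tail_general
    {V D G : Type} [Fintype V] [Fintype D]
    [Group G] [Fintype G] [MulAction G D] [MulAction G V]
    (bar : D → D)
    (hbar_invol : ∀ x : D, bar (bar x) = x)
    (hbar_nofix : ∀ x : D, bar x ≠ x)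
    (hbar_equiv : ∀ (g : G) (x : D), bar (g • x) = g • bar x)
    (E : Set (Sym2 D)) (hE : E = {e : Sym2 D | ∃ x : D, e = Sym2.mk x (bar x)})
    (Einv : Set (Sym2 D))
    (hEinv : Einv = {e : Sym2 D | e ∈ E ∧ ∃ x ∈ e, ∃ g : G, g • x = bar x})
    (g gQ : ℤ)
    (hg : g = 1 - (Nat.card V : ℤ) + (Nat.card E : ℤ))
    (hgQ : gQ = 1 - ((Nat.card {s : Set V | ∃ v : V, s = MulAction.orbit G v} : ℤ) + (Nat.card {s : Set (Sym2 D) | ∃ e ∈ E, s = {e' : Sym2 D | ∃ g : G, Sym2.map (fun y => g • y) e = e'}} : ℤ)) + (Nat.card {s : Set D | ∃ x : D, s = MulAction.orbit G x} : ℤ)) :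
    g - 1 = (Nat.card G : ℤ) * (gQ - 1)
      + (∑ᶠ v : V, ((Nat.card (MulAction.stabilizer G v) : ℤ) - 1))
      - (∑ᶠ e ∈ E, ((Nat.card {g : G | ∀ y ∈ e, g • y = y} : ℤ) - 1))
      + (∑ᶠ e ∈ Einv, (Nat.card {g : G | ∀ y ∈ e, g • y = y} : ℤ)) := by
  obtain rfl : E = Set.range fun x => s(x, bar x) := hE.trans (by ext; simp [eq_comm])
  subst hg hgQ hEinv
  simp only [← Sym2.orbit_eq_setOf]
  have hvert := finsum_card_stabilizer (G := G) (X := V)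
  have hdart := finsum_card_stabilizer (G := G) (X := D)
  have hedge := finsum_mem_card_stabilizer_of_smul_mem (smul_mem_range_pair hbar_equiv)
    (Set.finite_range _)
  have hdart_edge := finsum_card_stabilizer_eq_two_mul (G := G) hbar_invol hbar_nofix hbar_equiv
  have hedge_split :=
    finsum_mem_range_pair_card_stabilizer (G := G) hbar_invol hbar_nofix hbar_equiv
  rw [finsum_natCast_sub_one, finsum_mem_natCast_sub_one (Set.finite_range _),
    ← Nat.cast_finsum_mem ((Set.finite_range _).subset fun _ h => h.1)]
  apply_fun ((↑) : ℕ → ℤ) at hvert hdart hedge hdart_edge hedge_split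
  push_cast only [Nat.cast_mul, Nat.cast_add, Nat.cast_ofNat]
    at hvert hdart hedge hdart_edge hedge_split
  linear_combination hdart - hvert - hedge + hedge_split - hdart_edge

/-- A finite graph `X = (D, V; I, bar)`: `D` the darts, `V` the vertices,
`I` the incidence function, `bar` the fixed-point-free dart-reversing involution.
A finite group `G` acts on `X` via automorphisms (equivariantly and faithfully).
The edge set `E` consists of the unordered pairs `{x, bar x}`. -/
theorem riemann_hurwitz_tail
    {V D G : Type} [Fintype V] [Fintype D] [Nonempty V]
    [Group G] [Fintype G] [MulAction G D] [MulAction G V]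
    (I : D → V) (bar : D → D)
    (hbar_invol : ∀ x : D, bar (bar x) = x)
    (hbar_nofix : ∀ x : D, bar x ≠ x)
    (hI_equiv : ∀ (g : G) (x : D), I (g • x) = g • I x)
    (hbar_equiv : ∀ (g : G) (x : D), bar (g • x) = g • bar x)
    (hfaithful : ∀ g : G, (∀ x : D, g • x = x) → (∀ v : V, g • v = v) → g = 1)
    (E : Set (Sym2 D)) (hE : E = {e : Sym2 D | ∃ x : D, e = Sym2.mk x (bar x)})
    (hconn : ∀ u v : V, Relation.ReflTransGen
      (fun a b : V => ∃ x : D, I x = a ∧ I (bar x) = b) u v)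
    (Einv : Set (Sym2 D))
    (hEinv : Einv = {e : Sym2 D | e ∈ E ∧ ∃ x ∈ e, ∃ g : G, g • x = bar x})
    (g gQ : ℤ)
    (hg : g = 1 - (Nat.card V : ℤ) + (Nat.card E : ℤ))
    (hgQ : gQ = 1 - ((Nat.card {s : Set V | ∃ v : V, s = MulAction.orbit G v} : ℤ) + (Nat.card {s : Set (Sym2 D) | ∃ e ∈ E, s = {e' : Sym2 D | ∃ g : G, Sym2.map (fun y => g • y) e = e'}} : ℤ)) + (Nat.card {s : Set D | ∃ x : D, s = MulAction.orbit G x} : ℤ)) :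
    g - 1 = (Nat.card G : ℤ) * (gQ - 1)
      + (∑ᶠ v : V, ((Nat.card (MulAction.stabilizer G v) : ℤ) - 1))
      - (∑ᶠ e ∈ E, ((Nat.card {g : G | ∀ y ∈ e, g • y = y} : ℤ) - 1))
      + (∑ᶠ e ∈ Einv, (Nat.card {g : G | ∀ y ∈ e, g • y = y} : ℤ)) :=
  riemann_hurwitz_tail_general bar hbar_invol hbar_nofix hbar_equiv E hE Einv hEinv g gQ hg hgQ
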